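/- Regard A as an (A⋈^f J)-module via the surjective projection p_A : A⋈^f J → A, (a, f(a)+j) ↦ a. The map Λ : f^{-1}(J) → Hom_{A⋈^f J}(A, A⋈^f J), sending x ∈ f^{-1}(J) to the (A⋈^f J)-linear map λ_x : A → A⋈^f J defined by λ_x(a) := (a·x, 0), is a well-defined injective A-linear map; and Λ is surjective if and only if the annihilator of J in the subring f(A)+J of B is zero, i.e., the only element b ∈ f(A)+J with bJ = 0 is b = 0. -/

import Mathlib

section Amalgamation

variable {A B : Type*} [CommRing A] [CommRing B]

/-- The amalgamation `A ⋈^f J` of `A` with `B` along the ideal `J` of `B` with respect to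
the ring homomorphism `f : A → B`, realized as the subring
`{(a, f a + j) | a ∈ A, j ∈ J}` of `A × B`. -/
def amalg (f : A →+* B) (J : Ideal B) : Subring (A × B) where
  carrier := {x : A × B | x.2 - f x.1 ∈ J}
  zero_mem' := by simp
  one_mem' := by simp
  add_mem' := by
    intro x y hx hy
    simp only [Set.mem_setOf_eq, Prod.fst_add, Prod.snd_add, map_add] at *
    have h : x.2 + y.2 - (f x.1 + f y.1) = x.2 - f x.1 + (y.2 - f y.1) := by ring
    rw [h]; exact J.add_mem hx hy
  neg_mem' := by
    intro x hx
    simp only [Set.mem_setOf_eq, Prod.fst_neg, Prod.snd_neg, map_neg] at *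
    have h : -x.2 - -f x.1 = -(x.2 - f x.1) := by ring
    rw [h]; exact J.neg_mem hx
  mul_mem' := by
    intro x y hx hy
    simp only [Set.mem_setOf_eq, Prod.fst_mul, Prod.snd_mul, map_mul] at *
    have h : x.2 * y.2 - f x.1 * f y.1 = x.2 * (y.2 - f y.1) + (x.2 - f x.1) * f y.1 := by ring
    rw [h]
    exact J.add_mem (J.mul_mem_left _ hy) (J.mul_mem_right _ hx)

lemma mem_amalg_iff (f : A →+* B) (J : Ideal B) (x : A × B) :
    x ∈ amalg f J ↔ x.2 - f x.1 ∈ J := Iff.rfl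

/-- The canonical embedding `ι : A → A ⋈^f J`, `a ↦ (a, f a)`. -/
def iota (f : A →+* B) (J : Ideal B) : A →+* amalg f J :=
  ((RingHom.id A).prod f).codRestrict (amalg f J) (fun a => by
    simp [mem_amalg_iff])

/-- The natural projection `p_A : A ⋈^f J → A`. -/
def pA (f : A →+* B) (J : Ideal B) : amalg f J →+* A :=
  (RingHom.fst A B).comp (amalg f J).subtype

/-- The natural projection `p_B : A ⋈^f J → B`. -/
def pB (f : A →+* B) (J : Ideal B) : amalg f J →+* B :=
  (RingHom.snd A B).comp (amalg f J).subtype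

/-- The subring `f(A) + J` of `B`. -/
def fAJ (f : A →+* B) (J : Ideal B) : Subring B where
  carrier := {b : B | ∃ a : A, ∃ j ∈ J, b = f a + j}
  zero_mem' := ⟨0, 0, J.zero_mem, by simp⟩
  one_mem' := ⟨1, 0, J.zero_mem, by simp⟩
  add_mem' := by
    rintro x y ⟨a, j, hj, rfl⟩ ⟨a', j', hj', rfl⟩
    exact ⟨a + a', j + j', J.add_mem hj hj', by rw [map_add]; ring⟩
  neg_mem' := by
    rintro x ⟨a, j, hj, rfl⟩
    exact ⟨-a, -j, J.neg_mem hj, by rw [map_neg]; ring⟩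
  mul_mem' := by
    rintro x y ⟨a, j, hj, rfl⟩ ⟨a', j', hj', rfl⟩
    refine ⟨a * a', f a * j' + j * (f a' + j'), ?_, by rw [map_mul]; ring⟩
    exact J.add_mem (J.mul_mem_left _ hj') (J.mul_mem_right _ hj)

lemma f_mem_fAJ (f : A →+* B) (J : Ideal B) (a : A) : f a ∈ fAJ f J :=
  ⟨a, 0, J.zero_mem, by ring⟩

end Amalgamation

/-!
Every `(A ⋈^f J)`-linear map `φ : A → A ⋈^f J` is `a ↦ ι(a) · φ(1)`, and `u := φ(1)` can be any
element of `A ⋈^f J` killed by `ker p_A = 0 × J`, i.e. any `u = (x, b)` with `b J = 0`.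
The maps `λ_x` are exactly those with `u = (x, 0)`, and `(x, 0) ∈ A ⋈^f J` forces `f x ∈ J`.
Since the second coordinates of elements of `A ⋈^f J` fill up `f(A) + J`, every `φ` is some
`λ_x` iff no nonzero `b ∈ f(A) + J` kills `J`.
-/

section AmalgHom

variable {A B : Type*} [CommRing A] [CommRing B] (f : A →+* B) (J : Ideal B)

@[simp]
lemma coe_iota (a : A) : (iota f J a : A × B) = (a, f a) := rfl

lemma range_pB : (pB f J).range = fAJ f J := by
  ext b
  constructor
  · rintro ⟨u, rfl⟩
    exact ⟨(u : A × B).1, (u : A × B).2 - f (u : A × B).1, u.2, by simp [pB]⟩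
  · rintro ⟨a, j, hj, rfl⟩
    exact ⟨⟨(a, f a + j), by simpa [mem_amalg_iff] using hj⟩, rfl⟩

local instance : Module (amalg f J) A := Module.compHom A (pA f J)

local instance : Module A (A →ₗ[amalg f J] amalg f J) :=
  Module.compHom (A →ₗ[amalg f J] amalg f J) (iota f J)

lemma amalg_smul_def (r : amalg f J) (a : A) : r • a = (r : A × B).1 * a := rfl

lemma smul_amalgHom_apply (c : A) (φ : A →ₗ[amalg f J] amalg f J) (a : A) :
    (c • φ) a = iota f J c * φ a := rfl

lemma amalgHom_apply_eq_iota_mul (φ : A →ₗ[amalg f J] amalg f J) (a : A) :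
    φ a = iota f J a * φ 1 := by
  rw [← smul_eq_mul, ← φ.map_smul, amalg_smul_def, coe_iota, mul_one]

lemma snd_amalgHom_apply_one_mul_eq_zero (φ : A →ₗ[amalg f J] amalg f J) {j : B} (hj : j ∈ J) :
    (φ 1 : A × B).2 * j = 0 := by
  let z : amalg f J := ⟨(0, j), by simpa [mem_amalg_iff] using hj⟩
  have hz : z • (1 : A) = 0 := zero_mul 1
  have h := congrArg (fun u : amalg f J => (u : A × B).2) (φ.map_smul z 1)
  simp only [hz, map_zero, smul_eq_mul, Subring.coe_mul, Prod.snd_mul] at h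
  rw [mul_comm]
  exact h.symm

def iotaSpanSingleton (u : amalg f J) (hu : ∀ j ∈ J, (u : A × B).2 * j = 0) :
    A →ₗ[amalg f J] amalg f J where
  toFun a := iota f J a * u
  map_add' a c := by rw [map_add, add_mul]
  map_smul' r a := by
    -- `r - ι(r.1) = (0, r.2 - f r.1)` lies in `0 × J`, which kills `u`
    have hr : (u : A × B).2 * ((r : A × B).2 - f (r : A × B).1) = 0 := hu _ r.2
    apply Subtype.ext
    ext
    · simp [amalg_smul_def, mul_assoc]
    · simp only [amalg_smul_def, Subring.coe_mul, coe_iota, Prod.snd_mul, map_mul,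
        RingHom.id_apply, smul_eq_mul]
      linear_combination (-f a) * hr

lemma iotaSpanSingleton_apply (u : amalg f J) (hu : ∀ j ∈ J, (u : A × B).2 * j = 0)
    (a : A) : iotaSpanSingleton f J u hu a = iota f J a * u := rfl

lemma mk_zero_mem_amalg (x : Ideal.comap f J) : ((x : A), (0 : B)) ∈ amalg f J := by
  simpa [mem_amalg_iff] using J.neg_mem x.2

def amalgLambda : Ideal.comap f J →ₗ[A] (A →ₗ[amalg f J] amalg f J) where
  toFun x := iotaSpanSingleton f J ⟨_, mk_zero_mem_amalg f J x⟩ (fun _ _ => zero_mul _)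
  map_add' x y := by
    ext a
    · simp [iotaSpanSingleton_apply, mul_add]
    · simp [iotaSpanSingleton_apply]
  map_smul' c x := by
    ext a
    · simp [iotaSpanSingleton_apply, smul_amalgHom_apply, mul_left_comm]
    · simp [iotaSpanSingleton_apply, smul_amalgHom_apply]

lemma coe_amalgLambda_apply (x : Ideal.comap f J) (a : A) :
    (amalgLambda f J x a : A × B) = (a * x, 0) := by
  simp [amalgLambda, iotaSpanSingleton_apply]

lemma amalgLambda_injective : Function.Injective (amalgLambda f J) := by
  intro x y hxy
  have h := congrArg (fun φ : A →ₗ[amalg f J] amalg f J => (φ 1 : A × B).1) hxy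
  simpa [coe_amalgLambda_apply] using h

lemma amalgLambda_surjective_iff :
    Function.Surjective (amalgLambda f J) ↔
      ∀ b ∈ fAJ f J, (∀ j ∈ J, b * j = 0) → b = 0 := by
  rw [← range_pB]
  constructor
  · rintro hsurj _ ⟨u, rfl⟩ hu
    change ∀ j ∈ J, (u : A × B).2 * j = 0 at hu
    obtain ⟨x, hx⟩ := hsurj (iotaSpanSingleton f J u hu)
    have h := congrArg (fun φ : A →ₗ[amalg f J] amalg f J => (φ 1 : A × B).2) hx
    rw [iotaSpanSingleton_apply, (iota f J).map_one, one_mul, coe_amalgLambda_apply] at h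
    exact h.symm
  · intro hann φ
    have hb : (φ 1 : A × B).2 = 0 :=
      hann _ ⟨φ 1, rfl⟩ fun j hj => snd_amalgHom_apply_one_mul_eq_zero f J φ hj
    have hx : (φ 1 : A × B).1 ∈ Ideal.comap f J := by
      simpa [hb] using J.neg_mem (φ 1).2
    refine ⟨⟨_, hx⟩, LinearMap.ext fun a => Subtype.ext ?_⟩
    rw [coe_amalgLambda_apply, amalgHom_apply_eq_iota_mul f J φ a]
    ext <;> simp [hb]

end AmalgHom

/-- Regarding `A` as an `(A ⋈^f J)`-module via `p_A`, the map
`Λ : f⁻¹(J) → Hom_{A ⋈^f J}(A, A ⋈^f J)`, `Λ(x)(a) = (a x, 0)`, is a well-defined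
injective `A`-linear map, and `Λ` is surjective iff the annihilator of `J` in
`f(A) + J` is zero. -/
theorem stmt19 {A B : Type*} [CommRing A] [CommRing B] (f : A →+* B) (J : Ideal B) :
    letI : Module (amalg f J) A := Module.compHom A (pA f J)
    letI : Module A (A →ₗ[amalg f J] amalg f J) :=
      Module.compHom (A →ₗ[amalg f J] amalg f J) (iota f J)
    ∃ Λ : (Ideal.comap f J : Ideal A) →ₗ[A] (A →ₗ[amalg f J] amalg f J),
      (∀ (x : Ideal.comap f J) (a : A),
        ((Λ x a : A × B)) = ((a * (x : A), (0 : B)) : A × B)) ∧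
      Function.Injective Λ ∧
      (Function.Surjective Λ ↔
        ∀ b ∈ fAJ f J, (∀ j ∈ J, b * j = 0) → b = 0) :=
  ⟨amalgLambda f J, coe_amalgLambda_apply f J, amalgLambda_injective f J,
    amalgLambda_surjective_iff f J⟩
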